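/- arXiv:1808.03347 — 5 statements merged into one kernel-verified Lean document; each statement's English description precedes it below -/
import Mathlib

section
/- For every real number c ≥ 0, the iterates of the parallel Grover operator applied to the normalized source state converge as follows: lim_{N→∞} PG₂(N)^{⌊c·√N⌋} · (0,0,0,1)ᵀ = (sin²(√2·c), √2·sin(√2·c)·cos(√2·c), 0, cos²(√2·c))ᵀ, the limit taken entrywise in ℝ⁴. (In particular, in the basis ordering (e₁e₂, e₁N₂, N₁e₂, N₁N₂), after ⌊c√N⌋ iterations the amplitude of the sink state e₁e₂ tends to sin²(√2 c), that of e₁N₂ to √2 sin(√2 c)cos(√2 c), that of N₁e₂ to 0, and that of the source state N₁N₂ to cos²(√2 c).) -/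
open Matrix Filter Real
open scoped Kronecker

/-- The 2×2 Grover matrix. -/
noncomputable def GroverM (N : ℕ) : Matrix (Fin 2) (Fin 2) ℝ :=
  !![1 - 2 / (N : ℝ), 2 * Real.sqrt ((N : ℝ) - 1) / (N : ℝ);
     -(2 * Real.sqrt ((N : ℝ) - 1) / (N : ℝ)), 1 - 2 / (N : ℝ)]

/-- The 2×2 inversion-about-the-mean matrix. -/
noncomputable def IAMM (N : ℕ) : Matrix (Fin 2) (Fin 2) ℝ :=
  !![-(1 - 2 / (N : ℝ)), 2 * Real.sqrt ((N : ℝ) - 1) / (N : ℝ);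
     2 * Real.sqrt ((N : ℝ) - 1) / (N : ℝ), 1 - 2 / (N : ℝ)]

/-- The parallel Grover operator for `k = 2`, in the Kronecker-product basis
ordering `(e₁e₂, e₁N₂, N₁e₂, N₁N₂)`. -/
noncomputable def PG2 (N : ℕ) : Matrix (Fin 2 × Fin 2) (Fin 2 × Fin 2) ℝ :=
  (GroverM N ⊗ₖ (1 : Matrix (Fin 2) (Fin 2) ℝ)) *
    ((!![1, 0; 0, 0] : Matrix (Fin 2) (Fin 2) ℝ) ⊗ₖ GroverM N +
      (!![0, 0; 0, 1] : Matrix (Fin 2) (Fin 2) ℝ) ⊗ₖ IAMM N)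

/-!
Write `a = 1 - 2/N` and `b = 2√(N-1)/N`, so that `a² + b² = 1`. The operator `PG₂(N)` fixes
`(1, 0, 0, 1)`, negates `(-b, 0, -2a, b)`, and rotates the plane spanned by `(-a, 0, b, a)` and
`(0, r, 0, 0)`, `r = √(1 + a²)`, by the angle `ψ` with `cos ψ = a²`. Expanding the source state
`(0, 0, 0, 1)` in this basis gives `PG₂(N)ⁿ` applied to it in closed form. As `N → ∞` we have
`a → 1`, `b → 0` and `ψ ∼ sin ψ = b r ∼ 2√2/√N`, so `⌊c√N⌋ ψ → 2√2 c` and the closed form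
converges to the stated limit.
-/

open scoped Topology

namespace Matrix

variable {ι R : Type*} [Fintype ι] [DecidableEq ι]

theorem pow_mulVec_of_mulVec_eq_smul [CommRing R] {A : Matrix ι ι R} {μ : R} {v : ι → R}
    (h : A *ᵥ v = μ • v) (n : ℕ) : A ^ n *ᵥ v = μ ^ n • v := by
  induction n with
  | zero => simp
  | succ n ih => rw [pow_succ', ← mulVec_mulVec, ih, mulVec_smul, h, smul_smul, pow_succ]

theorem pow_mulVec_eq_cos_smul_add_sin_smul {A : Matrix ι ι ℝ} {ψ : ℝ} {p q : ι → ℝ}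
    (hp : A *ᵥ p = cos ψ • p + sin ψ • q) (hq : A *ᵥ q = cos ψ • q - sin ψ • p) (n : ℕ) :
    A ^ n *ᵥ p = cos (n * ψ) • p + sin (n * ψ) • q := by
  induction n with
  | zero => simp
  | succ n ih =>
    rw [pow_succ', ← mulVec_mulVec, ih, mulVec_add, mulVec_smul, mulVec_smul, hp, hq]
    push_cast
    rw [add_one_mul, cos_add, sin_add]
    module

end Matrix

def vec4 (x y z t : ℝ) : Fin 2 × Fin 2 → ℝ := Function.uncurry ![![x, y], ![z, t]]

theorem vec4_eq_ite (x y z t : ℝ) :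
    vec4 x y z t =
      fun p => if p = (0, 0) then x else if p = (0, 1) then y else if p = (1, 0) then z else t := by
  ext ⟨i, k⟩; fin_cases i <;> fin_cases k <;> rfl

@[simp] theorem vec4_add (x y z t x' y' z' t' : ℝ) :
    vec4 x y z t + vec4 x' y' z' t' = vec4 (x + x') (y + y') (z + z') (t + t') := by
  ext ⟨i, k⟩; fin_cases i <;> fin_cases k <;> rfl

@[simp] theorem vec4_sub (x y z t x' y' z' t' : ℝ) :
    vec4 x y z t - vec4 x' y' z' t' = vec4 (x - x') (y - y') (z - z') (t - t') := by
  ext ⟨i, k⟩; fin_cases i <;> fin_cases k <;> rfl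

@[simp] theorem smul_vec4 (c x y z t : ℝ) :
    c • vec4 x y z t = vec4 (c * x) (c * y) (c * z) (c * t) := by
  ext ⟨i, k⟩; fin_cases i <;> fin_cases k <;> rfl

theorem Filter.Tendsto.vec4 {α : Type*} {l : Filter α} {x y z t : α → ℝ} {x₀ y₀ z₀ t₀ : ℝ}
    (hx : Tendsto x l (𝓝 x₀)) (hy : Tendsto y l (𝓝 y₀)) (hz : Tendsto z l (𝓝 z₀))
    (ht : Tendsto t l (𝓝 t₀)) :
    Tendsto (fun n => vec4 (x n) (y n) (z n) (t n)) l (𝓝 (vec4 x₀ y₀ z₀ t₀)) := by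
  refine tendsto_pi_nhds.2 fun ⟨i, k⟩ => ?_
  fin_cases i <;> fin_cases k <;> assumption

noncomputable def parallelGrover (a b : ℝ) : Matrix (Fin 2 × Fin 2) (Fin 2 × Fin 2) ℝ :=
  (!![a, b; -b, a] ⊗ₖ (1 : Matrix (Fin 2) (Fin 2) ℝ)) *
    ((!![1, 0; 0, 0] : Matrix (Fin 2) (Fin 2) ℝ) ⊗ₖ !![a, b; -b, a] +
      (!![0, 0; 0, 1] : Matrix (Fin 2) (Fin 2) ℝ) ⊗ₖ !![-a, b; b, a])

theorem parallelGrover_mulVec_vec4 (a b x y z t : ℝ) :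
    parallelGrover a b *ᵥ vec4 x y z t =
      vec4 (a ^ 2 * x + a * b * y - a * b * z + b ^ 2 * t)
        (-(a * b * x) + a ^ 2 * y + b ^ 2 * z + a * b * t)
        (-(a * b * x) - b ^ 2 * y - a ^ 2 * z + a * b * t)
        (b ^ 2 * x - a * b * y + a * b * z + a ^ 2 * t) := by
  ext ⟨i, k⟩
  fin_cases i <;> fin_cases k <;>
    simp [parallelGrover, vec4, mulVec, dotProduct, Fintype.sum_prod_type, Matrix.mul_apply,
      Matrix.one_apply] <;> ring

section Spectral

variable {a b : ℝ}

theorem parallelGrover_mulVec_eigen_one (hab : a ^ 2 + b ^ 2 = 1) :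
    parallelGrover a b *ᵥ vec4 1 0 0 1 = (1 : ℝ) • vec4 1 0 0 1 := by
  rw [parallelGrover_mulVec_vec4, one_smul]
  congr 1 <;> grind

theorem parallelGrover_mulVec_eigen_neg_one (hab : a ^ 2 + b ^ 2 = 1) :
    parallelGrover a b *ᵥ vec4 (-b) 0 (-2 * a) b = (-1 : ℝ) • vec4 (-b) 0 (-2 * a) b := by
  rw [parallelGrover_mulVec_vec4, smul_vec4]
  congr 1 <;> grind

theorem parallelGrover_mulVec_rotPlane_fst (hab : a ^ 2 + b ^ 2 = 1) {ψ : ℝ}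
    (hcos : cos ψ = a ^ 2) (hsin : sin ψ = b * √(1 + a ^ 2)) :
    parallelGrover a b *ᵥ vec4 (-a) 0 b a =
      cos ψ • vec4 (-a) 0 b a + sin ψ • vec4 0 (√(1 + a ^ 2)) 0 0 := by
  have hr : √(1 + a ^ 2) ^ 2 = 1 + a ^ 2 := sq_sqrt (by positivity)
  rw [parallelGrover_mulVec_vec4, hcos, hsin, smul_vec4, smul_vec4, vec4_add]
  congr 1 <;> grind

theorem parallelGrover_mulVec_rotPlane_snd {ψ : ℝ} (hcos : cos ψ = a ^ 2)
    (hsin : sin ψ = b * √(1 + a ^ 2)) :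
    parallelGrover a b *ᵥ vec4 0 (√(1 + a ^ 2)) 0 0 =
      cos ψ • vec4 0 (√(1 + a ^ 2)) 0 0 - sin ψ • vec4 (-a) 0 b a := by
  rw [parallelGrover_mulVec_vec4, hcos, hsin, smul_vec4, smul_vec4, vec4_sub]
  congr 1 <;> ring

theorem parallelGrover_pow_mulVec_source (hab : a ^ 2 + b ^ 2 = 1) {ψ : ℝ}
    (hcos : cos ψ = a ^ 2) (hsin : sin ψ = b * √(1 + a ^ 2)) (n : ℕ) :
    parallelGrover a b ^ n *ᵥ vec4 0 0 0 1 =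
      (1 / 2 : ℝ) • vec4 1 0 0 1 + ((-1) ^ n * (b / (2 * (1 + a ^ 2)))) • vec4 (-b) 0 (-2 * a) b +
        (a / (1 + a ^ 2)) • (cos (n * ψ) • vec4 (-a) 0 b a +
          sin (n * ψ) • vec4 0 (√(1 + a ^ 2)) 0 0) := by
  have hsource : vec4 0 0 0 1 = (1 / 2 : ℝ) • vec4 1 0 0 1 +
      (b / (2 * (1 + a ^ 2))) • vec4 (-b) 0 (-2 * a) b + (a / (1 + a ^ 2)) • vec4 (-a) 0 b a := by
    have : 1 + a ^ 2 ≠ 0 := by positivity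
    simp only [smul_vec4, vec4_add]
    congr 1 <;> field_simp <;> grind
  rw [hsource, mulVec_add, mulVec_add, mulVec_smul, mulVec_smul, mulVec_smul,
    pow_mulVec_of_mulVec_eq_smul (parallelGrover_mulVec_eigen_one hab),
    pow_mulVec_of_mulVec_eq_smul (parallelGrover_mulVec_eigen_neg_one hab),
    pow_mulVec_eq_cos_smul_add_sin_smul (parallelGrover_mulVec_rotPlane_fst hab hcos hsin)
      (parallelGrover_mulVec_rotPlane_snd hcos hsin), one_pow, one_smul, smul_smul, mul_comm]

end Spectral

theorem Filter.Tendsto.neg_one_pow_mul {α : Type*} {l : Filter α} {f : α → ℝ}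
    (hf : Tendsto f l (𝓝 0)) (k : α → ℕ) : Tendsto (fun n => (-1) ^ k n * f n) l (𝓝 0) :=
  squeeze_zero_norm (a := fun n => ‖f n‖) (fun n => by simp) (by simpa using hf.norm)

theorem Filter.Tendsto.mul_of_tendsto_mul_sin {α : Type*} {l : Filter α} {x θ : α → ℝ} {L : ℝ}
    (hθ : Tendsto θ l (𝓝 0)) (hsin : Tendsto (fun n => x n * sin (θ n)) l (𝓝 L)) :
    Tendsto (fun n => x n * θ n) l (𝓝 L) := by
  have hsinc : Tendsto (fun n => sinc (θ n)) l (𝓝 1) := by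
    simpa [Function.comp_def] using (continuous_sinc.tendsto 0).comp hθ
  have h := hsin.div hsinc one_ne_zero
  rw [div_one] at h
  refine h.congr' ?_
  filter_upwards [hsinc.eventually_ne one_ne_zero] with n hn
  have hsin_eq : sin (θ n) = θ n * sinc (θ n) := by
    by_cases h : θ n = 0
    · simp [h]
    · rw [sinc_of_ne_zero h]; field_simp
  simp only [Pi.div_apply]
  rw [hsin_eq]
  field_simp

noncomputable def groverCos (N : ℕ) : ℝ := 1 - 2 / N

noncomputable def groverSin (N : ℕ) : ℝ := 2 * √(N - 1) / N

theorem PG2_eq_parallelGrover (N : ℕ) : PG2 N = parallelGrover (groverCos N) (groverSin N) := rfl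

theorem groverSin_nonneg (N : ℕ) : 0 ≤ groverSin N := by unfold groverSin; positivity

-- At `N = 0` this holds through the junk values `groverCos 0 = 1`, `groverSin 0 = 0`.
theorem groverSin_sq (N : ℕ) : groverSin N ^ 2 = 1 - groverCos N ^ 2 := by
  rcases Nat.eq_zero_or_pos N with rfl | hN
  · simp [groverSin, groverCos]
  have hN : (1 : ℝ) ≤ N := by exact_mod_cast hN
  rw [groverSin, groverCos, div_pow, mul_pow, sq_sqrt (by linarith)]
  field_simp
  ring

theorem groverCos_sq_add_groverSin_sq (N : ℕ) : groverCos N ^ 2 + groverSin N ^ 2 = 1 := by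
  rw [groverSin_sq]; ring

theorem tendsto_groverCos : Tendsto groverCos atTop (𝓝 1) := by
  have h := (tendsto_const_nhds (x := (1 : ℝ))).sub (tendsto_const_div_atTop_nhds_zero_nat (2 : ℝ))
  rwa [sub_zero] at h

theorem tendsto_groverSin : Tendsto groverSin atTop (𝓝 0) := by
  have h := ((tendsto_const_nhds (x := (1 : ℝ))).sub (tendsto_groverCos.pow 2)).sqrt
  simp only [one_pow, sub_self, sqrt_zero] at h
  refine h.congr fun N => ?_
  rw [← groverSin_sq, sqrt_sq (groverSin_nonneg N)]

theorem tendsto_sqrt_mul_groverSin : Tendsto (fun N : ℕ => √N * groverSin N) atTop (𝓝 2) := by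
  have h := (tendsto_const_nhds (x := (4 : ℝ))).sub
    (tendsto_const_div_atTop_nhds_zero_nat (4 : ℝ))
  rw [sub_zero, show (4 : ℝ) = 2 ^ 2 by norm_num] at h
  refine (h.sqrt.congr' ?_).trans (by rw [sqrt_sq zero_le_two])
  filter_upwards [eventually_ge_atTop 1] with N hN
  have hN : (1 : ℝ) ≤ N := by exact_mod_cast hN
  rw [← sqrt_sq (mul_nonneg (sqrt_nonneg N) (groverSin_nonneg N)), mul_pow, sq_sqrt (by linarith),
    groverSin, div_pow, mul_pow, sq_sqrt (by linarith)]
  congr 1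
  field_simp

theorem tendsto_one_add_groverCos_sq : Tendsto (fun N => 1 + groverCos N ^ 2) atTop (𝓝 2) := by
  have h := (tendsto_const_nhds (x := (1 : ℝ))).add (tendsto_groverCos.pow 2)
  rwa [one_pow, one_add_one_eq_two] at h

noncomputable def groverAngle (N : ℕ) : ℝ := arccos (groverCos N ^ 2)

theorem cos_groverAngle (N : ℕ) : cos (groverAngle N) = groverCos N ^ 2 :=
  cos_arccos (by nlinarith [sq_nonneg (groverCos N)])
    (by nlinarith [groverCos_sq_add_groverSin_sq N, sq_nonneg (groverSin N)])

theorem sin_groverAngle (N : ℕ) :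
    sin (groverAngle N) = groverSin N * √(1 + groverCos N ^ 2) := by
  rw [groverAngle, sin_arccos, ← sqrt_sq (groverSin_nonneg N), ← sqrt_mul (sq_nonneg _),
    groverSin_sq]
  ring_nf

theorem tendsto_groverAngle : Tendsto groverAngle atTop (𝓝 0) := by
  have h := (continuous_arccos.tendsto _).comp (tendsto_groverCos.pow 2)
  rwa [one_pow, arccos_one] at h

theorem tendsto_sqrt_mul_groverAngle :
    Tendsto (fun N : ℕ => √N * groverAngle N) atTop (𝓝 (2 * √2)) := by
  refine tendsto_groverAngle.mul_of_tendsto_mul_sin ?_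
  simp_rw [sin_groverAngle, ← mul_assoc]
  exact tendsto_sqrt_mul_groverSin.mul tendsto_one_add_groverCos_sq.sqrt

theorem tendsto_floor_mul_groverAngle {c : ℝ} (hc : 0 ≤ c) :
    Tendsto (fun N : ℕ => ⌊c * √N⌋₊ * groverAngle N) atTop (𝓝 (2 * √2 * c)) := by
  have hsqrt : Tendsto (fun N : ℕ => √N) atTop atTop :=
    tendsto_sqrt_atTop.comp tendsto_natCast_atTop_atTop
  have h := ((tendsto_nat_floor_mul_div_atTop hc).comp hsqrt).mul tendsto_sqrt_mul_groverAngle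
  rw [mul_comm c] at h
  refine h.congr' ?_
  filter_upwards [eventually_ge_atTop 1] with N hN
  have : √N ≠ 0 := by positivity
  simp only [Function.comp_apply]
  field_simp

theorem pg2_tendsto (c : ℝ) (hc : 0 ≤ c) :
    Tendsto
      (fun N : ℕ =>
        (PG2 N ^ ⌊c * Real.sqrt N⌋₊).mulVec
          (fun p : Fin 2 × Fin 2 => if p = (1, 1) then 1 else 0))
      atTop
      (nhds (fun p : Fin 2 × Fin 2 =>
        if p = (0, 0) then Real.sin (Real.sqrt 2 * c) ^ 2
        else if p = (0, 1) then
          Real.sqrt 2 * Real.sin (Real.sqrt 2 * c) * Real.cos (Real.sqrt 2 * c)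
        else if p = (1, 0) then 0
        else Real.cos (Real.sqrt 2 * c) ^ 2)) := by
  have hsource : (fun p : Fin 2 × Fin 2 => if p = (1, 1) then (1 : ℝ) else 0) = vec4 0 0 0 1 := by
    ext ⟨i, k⟩; fin_cases i <;> fin_cases k <;> rfl
  -- the closed form evaluated at `a = 1`, `b = 0`, `1 + a² = 2` and `n ψ = 2√2 c`
  have hlimit : vec4 (sin (√2 * c) ^ 2) (√2 * sin (√2 * c) * cos (√2 * c)) 0 (cos (√2 * c) ^ 2) =
      (1 / 2 : ℝ) • vec4 1 0 0 1 + (0 : ℝ) • vec4 (-0) 0 (-2 * 1) 0 +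
        (1 / 2 : ℝ) • (cos (2 * √2 * c) • vec4 (-1) 0 0 1 + sin (2 * √2 * c) • vec4 0 √2 0 0) := by
    rw [show 2 * √2 * c = 2 * (√2 * c) by ring, cos_two_mul, sin_two_mul]
    have := sin_sq_add_cos_sq (√2 * c)
    simp only [smul_vec4, vec4_add]
    congr 1 <;> grind
  rw [hsource, ← vec4_eq_ite, hlimit]
  simp_rw [PG2_eq_parallelGrover, parallelGrover_pow_mulVec_source
    (groverCos_sq_add_groverSin_sq _) (cos_groverAngle _) (sin_groverAngle _)]
  have ha := tendsto_groverCos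
  have hb := tendsto_groverSin
  have hθ := tendsto_floor_mul_groverAngle hc
  have hden := tendsto_one_add_groverCos_sq
  have hflip : Tendsto (fun N => groverSin N / (2 * (1 + groverCos N ^ 2))) atTop (𝓝 0) := by
    have h := hb.div ((tendsto_const_nhds (x := (2 : ℝ))).mul hden) (by norm_num)
    rw [zero_div] at h
    exact h
  exact (tendsto_const_nhds.add ((hflip.neg_one_pow_mul _).smul (hb.neg.vec4 tendsto_const_nhds
    (tendsto_const_nhds.mul ha) hb))).add ((ha.div hden two_ne_zero).smul
    (((continuous_cos.tendsto _).comp hθ).smul (ha.neg.vec4 tendsto_const_nhds hb ha) |>.add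
      (((continuous_sin.tendsto _).comp hθ).smul
        (tendsto_const_nhds.vec4 hden.sqrt tendsto_const_nhds tendsto_const_nhds))))
end

section
/- Let E be a finite-dimensional real inner product space, U ⊆ E a subspace, and P the orthogonal projection onto U. For every c > 0 there exists a constant C > 0 (depending only on c and the dimension of E) such that the following holds. Suppose 0 < ε ≤ 1, and S, A, B are linear operators on E satisfying: (i) ‖S‖ ≤ 1, ‖A‖ ≤ 1, ‖B‖ ≤ 1; (ii) A and B map U into U and fix every vector of the orthogonal complement of U; (iii) ‖P((S − I)v)‖ ≤ ε·‖v‖ for every v ∈ E; (iv) ‖A − B‖ ≤ ε; (v) ‖A² − I‖ ≤ ε² and ‖B² − I‖ ≤ ε². Then for every vector v₀ with ‖v₀‖ ≤ 1, ‖A v₀ − v₀‖ ≤ ε and ‖B v₀ − v₀‖ ≤ ε, and every natural number n with n·ε ≤ c, one has ‖(A∘S)ⁿ v₀ − (B∘S)ⁿ v₀‖ ≤ C·ε. (This is the paper's replacement theorem: A may be replaced by B within (AS)ⁿ with negligible error, with ε playing the role of 1/√N and n in O(√N).) -/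
/-!
Write `x k = (A S)ᵏ v₀`, `y k = (B S)ᵏ v₀` and split `x k - y k` into its components `p k ∈ U`
and `q k ∈ Uᗮ`. Since `A` and `B` act as the identity on `Uᗮ`, the component `q` is moved by `S`
alone, and as `P S ≈ P` its energy can only grow by what leaks out of `U`:
`‖q (k+1)‖ ≤ max ‖q k‖ ‖p k‖ + 2ε ‖p k‖`. Inside `U` the operators `A` and `B` are `ε`-close to
involutions, so the errors of two consecutive replacements cancel up to `O(ε²)`:
`‖p (k+2)‖ ≤ ‖p k‖ + 3ε² + ε (‖x k - y k‖ + ‖x (k+1) - y (k+1)‖)`. For `n ε ≤ c` these two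
recursions close up, through the discrete Grönwall inequality, to `‖x n - y n‖ = O(ε)`.
-/

open Finset Real

section Recurrence

variable {ε c : ℝ} {a b d : ℕ → ℝ}

-- `ε * envelope ε d k` majorizes the `U`-component at step `k`: the two-step recursion adds
-- `3 ε²` every two steps and `ε * d j` at every step.
noncomputable def envelope (ε : ℝ) (d : ℕ → ℝ) (k : ℕ) : ℝ :=
  1 + 3 / 2 * k * ε + ∑ j ∈ range k, d j

theorem envelope_zero : envelope ε d 0 = 1 := by simp [envelope]

theorem envelope_succ (k : ℕ) : envelope ε d (k + 1) = envelope ε d k + 3 / 2 * ε + d k := by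
  simp only [envelope, sum_range_succ, Nat.cast_succ]
  ring

theorem envelope_mono (hε : 0 ≤ ε) (hd : ∀ k, 0 ≤ d k) : Monotone (envelope ε d) :=
  monotone_nat_of_le_succ fun k => by rw [envelope_succ]; linarith [hd k]

theorem le_envelope_of_two_step (hε : 0 ≤ ε) (hd : ∀ k, 0 ≤ d k) (h₀ : a 0 ≤ ε) (h₁ : a 1 ≤ ε)
    (hstep : ∀ k, a (k + 2) ≤ a k + 3 * ε ^ 2 + ε * (d k + d (k + 1))) (k : ℕ) :
    a k ≤ ε * envelope ε d k := by
  induction k using Nat.twoStepInduction with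
  | zero => simpa [envelope_zero] using h₀
  | one =>
    rw [envelope_succ, envelope_zero]
    nlinarith [hd 0]
  | more k ih₀ _ =>
    rw [envelope_succ, envelope_succ]
    linear_combination hstep k + ih₀

theorem le_mul_of_le_max_add {F : ℕ → ℝ} (hε : 0 ≤ ε) (hF : Monotone F) (ha : ∀ k, 0 ≤ a k)
    (haF : ∀ k, a k ≤ F k) (h₀ : b 0 ≤ F 0)
    (hstep : ∀ k, b (k + 1) ≤ max (b k) (a k) + 2 * ε * a k) (k : ℕ) :
    b k ≤ (1 + 2 * ε * k) * F k := by
  induction k with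
  | zero => simpa using h₀
  | succ k ih =>
    have hF₀ : 0 ≤ F k := (ha k).trans (haF k)
    have hmax : max (b k) (a k) ≤ (1 + 2 * ε * k) * F k :=
      max_le ih ((haF k).trans (le_mul_of_one_le_left hF₀ (by nlinarith [k.cast_nonneg (α := ℝ)])))
    calc b (k + 1) ≤ (1 + 2 * ε * k) * F k + 2 * ε * F k := by
          nlinarith [hstep k, haF k]
      _ = (1 + 2 * ε * (k + 1 : ℕ)) * F k := by push_cast; ring
      _ ≤ (1 + 2 * ε * (k + 1 : ℕ)) * F (k + 1) := by
          gcongr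
          exact hF k.le_succ

theorem envelope_le (hε : 0 ≤ ε) {n : ℕ} (hn : n * ε ≤ c)
    (hdF : ∀ k, d k ≤ (2 + 2 * ε * k) * (ε * envelope ε d k)) :
    envelope ε d n ≤ (1 + 3 / 2 * c) * exp ((2 + 2 * c) * c) := by
  have hc : 0 ≤ c := (by positivity : (0 : ℝ) ≤ n * ε).trans hn
  have hgron := discrete_gronwall (n₀ := 0) (u := envelope ε d) (b := fun _ => 3 / 2 * ε)
    (c := fun k => (2 + 2 * ε * k) * ε) (by rw [envelope_zero]; norm_num)
    (fun k _ => by rw [envelope_succ]; linear_combination hdF k)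
    (fun k _ => by positivity) (fun k _ => by positivity) (Nat.zero_le n)
  rw [envelope_zero, Nat.Ico_zero_eq_range, sum_const, card_range, nsmul_eq_mul] at hgron
  have hrate : ∑ k ∈ range n, (2 + 2 * ε * k) * ε ≤ (2 + 2 * c) * c :=
    calc ∑ k ∈ range n, (2 + 2 * ε * k) * ε ≤ ∑ k ∈ range n, (2 + 2 * c) * ε := by
          refine sum_le_sum fun k hk => ?_
          have : (k : ℝ) * ε ≤ c :=
            (mul_le_mul_of_nonneg_right (by exact_mod_cast (mem_range.mp hk).le) hε).trans hn
          nlinarith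
      _ = (2 + 2 * c) * (n * ε) := by rw [sum_const, card_range, nsmul_eq_mul]; ring
      _ ≤ (2 + 2 * c) * c := by gcongr
  calc envelope ε d n ≤ (1 + n * (3 / 2 * ε)) * exp (∑ k ∈ range n, (2 + 2 * ε * k) * ε) := hgron
    _ ≤ (1 + 3 / 2 * c) * exp ((2 + 2 * c) * c) := by gcongr (1 + ?_) * exp ?_; linarith

theorem le_mul_of_recurrences (hε : 0 ≤ ε) {n : ℕ} (hn : n * ε ≤ c)
    (ha : ∀ k, 0 ≤ a k) (hd : ∀ k, 0 ≤ d k) (hdab : ∀ k, d k ≤ a k + b k)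
    (ha₀ : a 0 ≤ ε) (ha₁ : a 1 ≤ ε)
    (ha_step : ∀ k, a (k + 2) ≤ a k + 3 * ε ^ 2 + ε * (d k + d (k + 1)))
    (hb₀ : b 0 ≤ ε) (hb_step : ∀ k, b (k + 1) ≤ max (b k) (a k) + 2 * ε * a k) :
    d n ≤ (2 + 2 * c) * (1 + 3 / 2 * c) * exp ((2 + 2 * c) * c) * ε := by
  have haF := le_envelope_of_two_step hε hd ha₀ ha₁ ha_step
  have hbF := le_mul_of_le_max_add hε ((envelope_mono hε hd).const_mul hε) ha haF
    (by rwa [envelope_zero, mul_one]) hb_step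
  have hdF : ∀ k, d k ≤ (2 + 2 * ε * k) * (ε * envelope ε d k) := fun k => by
    linarith [hdab k, haF k, hbF k]
  have hnc : 2 + 2 * ε * n ≤ 2 + 2 * c := by linarith
  calc d n ≤ (2 + 2 * ε * n) * (ε * envelope ε d n) := hdF n
    _ ≤ (2 + 2 * c) * (ε * ((1 + 3 / 2 * c) * exp ((2 + 2 * c) * c))) := by
        refine mul_le_mul hnc (mul_le_mul_of_nonneg_left (envelope_le hε hn hdF) hε)
          ((ha n).trans (haF n)) ?_
        nlinarith [mul_nonneg hε n.cast_nonneg]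
    _ = (2 + 2 * c) * (1 + 3 / 2 * c) * exp ((2 + 2 * c) * c) * ε := by ring

end Recurrence

theorem sq_sub_sq_le_of_sub_le {a a' δ : ℝ} (ha : 0 ≤ a) (ha' : 0 ≤ a') (hδ : 0 ≤ δ)
    (h : a - δ ≤ a') : a ^ 2 - a' ^ 2 ≤ 2 * a * δ := by
  rcases le_total a a' with haa' | haa'
  · nlinarith
  · nlinarith

theorem ContinuousLinearMap.norm_apply_le_of_norm_le_one {𝕜 E : Type*} [NontriviallyNormedField 𝕜]
    [SeminormedAddCommGroup E] [NormedSpace 𝕜 E] {T : E →L[𝕜] E} (hT : ‖T‖ ≤ 1) (v : E) :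
    ‖T v‖ ≤ ‖v‖ :=
  (T.le_of_opNorm_le hT v).trans_eq (one_mul _)

theorem ContinuousLinearMap.norm_pow_apply_le_of_norm_le_one {𝕜 E : Type*}
    [NontriviallyNormedField 𝕜] [SeminormedAddCommGroup E] [NormedSpace 𝕜 E] {T : E →L[𝕜] E}
    (hT : ‖T‖ ≤ 1) (k : ℕ) (v : E) : ‖(T ^ k) v‖ ≤ ‖v‖ := by
  induction k with
  | zero => simp
  | succ k ih =>
    rw [pow_succ', mul_apply_eq_comp]
    exact (T.norm_apply_le_of_norm_le_one hT _).trans ih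

namespace Submodule

variable {𝕜 E : Type*} [RCLike 𝕜] [NormedAddCommGroup E] [InnerProductSpace 𝕜 E]
  {U : Submodule 𝕜 E} [U.HasOrthogonalProjection]

theorem norm_le_norm_starProjection_add (v : E) :
    ‖v‖ ≤ ‖U.starProjection v‖ + ‖Uᗮ.starProjection v‖ := by
  conv_lhs => rw [← U.starProjection_add_starProjection_orthogonal v]
  exact norm_add_le _ _

theorem apply_eq_apply_starProjection_add {T : E →L[𝕜] E} (hTUperp : ∀ w ∈ Uᗮ, T w = w)
    (v : E) : T v = T (U.starProjection v) + (v - U.starProjection v) := by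
  rw [← hTUperp _ (U.sub_starProjection_mem_orthogonal v), ← map_add, add_sub_cancel]

theorem starProjection_apply_comm {T : E →L[𝕜] E} (hTU : ∀ u ∈ U, T u ∈ U)
    (hTUperp : ∀ w ∈ Uᗮ, T w = w) (v : E) :
    U.starProjection (T v) = T (U.starProjection v) :=
  eq_starProjection_of_mem_orthogonal' (hTU _ (U.starProjection_apply_mem v))
    (U.sub_starProjection_mem_orthogonal v) (apply_eq_apply_starProjection_add hTUperp v)

theorem orthogonal_starProjection_apply_eq {T : E →L[𝕜] E} (hTU : ∀ u ∈ U, T u ∈ U)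
    (hTUperp : ∀ w ∈ Uᗮ, T w = w) (v : E) :
    Uᗮ.starProjection (T v) = Uᗮ.starProjection v := by
  rw [starProjection_orthogonal_val, starProjection_orthogonal_val,
    starProjection_apply_comm hTU hTUperp, apply_eq_apply_starProjection_add hTUperp v,
    add_sub_cancel_left]

theorem norm_orthogonal_starProjection_le {S : E →L[𝕜] E} {ε : ℝ} (hε : 0 ≤ ε) {v : E}
    (hS : ‖S v‖ ≤ ‖v‖)
    (hSU : ‖U.starProjection (S v) - U.starProjection v‖ ≤ ε * ‖v‖) :
    ‖Uᗮ.starProjection (S v)‖ ≤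
      max ‖Uᗮ.starProjection v‖ ‖U.starProjection v‖ + 2 * ε * ‖U.starProjection v‖ := by
  set a := ‖U.starProjection v‖
  set b := ‖Uᗮ.starProjection v‖
  set m := max b a
  have hdrop : a - ε * ‖v‖ ≤ ‖U.starProjection (S v)‖ := by
    have := norm_sub_norm_le (U.starProjection v) (U.starProjection (S v))
    rw [norm_sub_rev] at this
    linarith
  have hv : ‖v‖ ≤ 2 * m := by
    linarith [norm_le_norm_starProjection_add (U := U) v, le_max_left b a, le_max_right b a]
  have hpyth := U.norm_sq_eq_add_norm_sq_starProjection v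
  have hpyth' := U.norm_sq_eq_add_norm_sq_starProjection (S v)
  have hloss := sq_sub_sq_le_of_sub_le (norm_nonneg _) (norm_nonneg _)
    (mul_nonneg hε (norm_nonneg v)) hdrop
  have hSsq : ‖S v‖ ^ 2 ≤ ‖v‖ ^ 2 := pow_le_pow_left₀ (norm_nonneg _) hS 2
  have hbm : b ^ 2 ≤ m ^ 2 := pow_le_pow_left₀ (norm_nonneg _) (le_max_left b a) 2
  have ham : 2 * a * (ε * ‖v‖) ≤ 4 * ε * a * m := by
    have : 0 ≤ ε * a := mul_nonneg hε (norm_nonneg _)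
    nlinarith
  have hsq : ‖Uᗮ.starProjection (S v)‖ ^ 2 ≤ (m + 2 * ε * a) ^ 2 := by
    nlinarith [sq_nonneg (ε * a)]
  exact (pow_le_pow_iff_left₀ (norm_nonneg _)
    (by positivity) two_ne_zero).mp hsq

theorem norm_starProjection_two_step_le {S A B : E →L[𝕜] E} {ε : ℝ} (hε : 0 ≤ ε)
    (hS : ‖S‖ ≤ 1) (hA : ‖A‖ ≤ 1) (hB : ‖B‖ ≤ 1) (hAB : ‖A - B‖ ≤ ε)
    (hA2 : ‖A ^ 2 - 1‖ ≤ ε ^ 2) (hB2 : ‖B ^ 2 - 1‖ ≤ ε ^ 2)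
    (hPA : ∀ v, U.starProjection (A v) = A (U.starProjection v))
    (hPB : ∀ v, U.starProjection (B v) = B (U.starProjection v))
    (hSU : ∀ v, ‖U.starProjection (S v) - U.starProjection v‖ ≤ ε * ‖v‖)
    {x y : E} (hx : ‖x‖ ≤ 1) (hy : ‖y‖ ≤ 1) :
    ‖U.starProjection (A (S (A (S x))) - B (S (B (S y))))‖ ≤
      ‖U.starProjection (x - y)‖ + 3 * ε ^ 2 + ε * (‖x - y‖ + ‖A (S x) - B (S y)‖) := by
  set P := U.starProjection
  set α := P (S x)
  set β := P (S y)
  set x' := A (S x)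
  set y' := B (S y)
  have hSv := ContinuousLinearMap.norm_apply_le_of_norm_le_one hS
  have hAv := ContinuousLinearMap.norm_apply_le_of_norm_le_one hA
  have hBv := ContinuousLinearMap.norm_apply_le_of_norm_le_one hB
  have hsq : ∀ {T : E →L[𝕜] E}, ‖T ^ 2 - 1‖ ≤ ε ^ 2 → ∀ v, ‖v‖ ≤ 1 → ‖T (T v) - v‖ ≤ ε ^ 2 :=
    fun h v hv => by
      have := ContinuousLinearMap.le_of_opNorm_le _ h v
      simp only [sub_apply, pow_two, mul_apply_eq_comp, one_apply_eq_self] at this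
      nlinarith [norm_nonneg v]
  have hα : ‖α‖ ≤ 1 := ((U.norm_starProjection_apply_le _).trans (hSv x)).trans hx
  have hβ : ‖β‖ ≤ 1 := ((U.norm_starProjection_apply_le _).trans (hSv y)).trans hy
  have hy' : ‖y'‖ ≤ 1 := ((hBv _).trans (hSv y)).trans hy
  have hαβ : ‖α - β‖ ≤ ‖P (x - y)‖ + ε * ‖x - y‖ := by
    have hαβ : α - β = P (S (x - y)) := by simp only [α, β, map_sub]
    rw [hαβ]
    linarith [norm_sub_norm_le (P (S (x - y))) (P (x - y)), hSU (x - y)]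
  have hdefect : ‖P (S x') - P x' - (P (S y') - P y')‖ ≤ ε * ‖x' - y'‖ := by
    simpa only [map_sub, sub_sub_sub_comm] using hSU (x' - y')
  have hmixed : ‖(A - B) (P (S y') - P y')‖ ≤ ε ^ 2 := by
    have := ContinuousLinearMap.le_of_opNorm_le _ hAB (P (S y') - P y')
    nlinarith [hSU y', norm_nonneg (P (S y') - P y')]
  -- `P x' = A α` and `P y' = B β`, so up to the defects of `P S ≈ P` at `x'` and `y'` the
  -- left side is `A (A α) - B (B β)`.
  have hsplit : P (A (S x') - B (S y')) = (A (A α) - α) - (B (B β) - β) + (α - β) +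
      A (P (S x') - P x' - (P (S y') - P y')) + (A - B) (P (S y') - P y') := by
    simp only [P, x', y', α, β, map_sub, hPA, hPB, sub_apply]
    abel
  calc ‖P (A (S x') - B (S y'))‖
      ≤ ‖A (A α) - α‖ + ‖B (B β) - β‖ + ‖α - β‖ +
          ‖A (P (S x') - P x' - (P (S y') - P y'))‖ + ‖(A - B) (P (S y') - P y')‖ := by
        rw [hsplit]
        refine (norm_add_le _ _).trans (add_le_add_left ((norm_add_le _ _).trans
          (add_le_add_left ((norm_add_le _ _).trans (add_le_add_left (norm_sub_le _ _) _)) _)) _)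
    _ ≤ ε ^ 2 + ε ^ 2 + (‖P (x - y)‖ + ε * ‖x - y‖) + ε * ‖x' - y'‖ + ε ^ 2 := by
        gcongr
        · exact hsq hA2 α hα
        · exact hsq hB2 β hβ
        · exact (hAv _).trans hdefect
    _ = ‖P (x - y)‖ + 3 * ε ^ 2 + ε * (‖x - y‖ + ‖x' - y'‖) := by ring

end Submodule

theorem norm_pow_apply_sub_pow_apply_le {𝕜 E : Type*} [RCLike 𝕜] [NormedAddCommGroup E]
    [InnerProductSpace 𝕜 E] {U : Submodule 𝕜 E} [U.HasOrthogonalProjection] {S A B : E →L[𝕜] E}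
    {ε c : ℝ} (hε : 0 ≤ ε) (hS : ‖S‖ ≤ 1) (hA : ‖A‖ ≤ 1) (hB : ‖B‖ ≤ 1)
    (hAU : ∀ u ∈ U, A u ∈ U) (hBU : ∀ u ∈ U, B u ∈ U)
    (hAUperp : ∀ w ∈ Uᗮ, A w = w) (hBUperp : ∀ w ∈ Uᗮ, B w = w)
    (hSU : ∀ v, ‖U.starProjection (S v) - U.starProjection v‖ ≤ ε * ‖v‖)
    (hAB : ‖A - B‖ ≤ ε) (hA2 : ‖A ^ 2 - 1‖ ≤ ε ^ 2) (hB2 : ‖B ^ 2 - 1‖ ≤ ε ^ 2)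
    {v₀ : E} (hv₀ : ‖v₀‖ ≤ 1) {n : ℕ} (hn : n * ε ≤ c) :
    ‖((A ∘L S) ^ n) v₀ - ((B ∘L S) ^ n) v₀‖ ≤
      (2 + 2 * c) * (1 + 3 / 2 * c) * exp ((2 + 2 * c) * c) * ε := by
  have hSv := ContinuousLinearMap.norm_apply_le_of_norm_le_one hS
  set x := fun k => ((A ∘L S) ^ k) v₀
  set y := fun k => ((B ∘L S) ^ k) v₀
  have hx_succ : ∀ k, x (k + 1) = A (S (x k)) := fun k => by
    simp only [x, pow_succ', mul_apply_eq_comp, ContinuousLinearMap.comp_apply]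
  have hy_succ : ∀ k, y (k + 1) = B (S (y k)) := fun k => by
    simp only [y, pow_succ', mul_apply_eq_comp, ContinuousLinearMap.comp_apply]
  have hx : ∀ k, ‖x k‖ ≤ 1 := fun k =>
    (ContinuousLinearMap.norm_pow_apply_le_of_norm_le_one ((A.opNorm_comp_le S).trans
      (mul_le_one₀ hA (norm_nonneg S) hS)) k v₀).trans hv₀
  have hy : ∀ k, ‖y k‖ ≤ 1 := fun k =>
    (ContinuousLinearMap.norm_pow_apply_le_of_norm_le_one ((B.opNorm_comp_le S).trans
      (mul_le_one₀ hB (norm_nonneg S) hS)) k v₀).trans hv₀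
  refine le_mul_of_recurrences (d := fun k => ‖x k - y k‖)
    (a := fun k => ‖U.starProjection (x k - y k)‖)
    (b := fun k => ‖Uᗮ.starProjection (x k - y k)‖) hε hn (fun _ => norm_nonneg _)
    (fun _ => norm_nonneg _) (fun k => Submodule.norm_le_norm_starProjection_add _)
    (by simp [x, y, hε]) ?_ (fun k => ?_) (by simp [x, y, hε]) (fun k => ?_)
  · have h₁ : x 1 - y 1 = (A - B) (S v₀) := by simp [x, y]
    calc ‖U.starProjection (x 1 - y 1)‖ ≤ ‖(A - B) (S v₀)‖ :=
          h₁ ▸ U.norm_starProjection_apply_le _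
      _ ≤ ε := (ContinuousLinearMap.le_of_opNorm_le_of_le _ hAB
          ((hSv v₀).trans hv₀)).trans_eq (mul_one ε)
  · simp only [hx_succ, hy_succ]
    exact Submodule.norm_starProjection_two_step_le hε hS hA hB hAB hA2 hB2
      (Submodule.starProjection_apply_comm hAU hAUperp)
      (Submodule.starProjection_apply_comm hBU hBUperp) hSU (hx k) (hy k)
  · rw [hx_succ, hy_succ, map_sub, Submodule.orthogonal_starProjection_apply_eq hAU hAUperp,
      Submodule.orthogonal_starProjection_apply_eq hBU hBUperp, ← map_sub, ← map_sub S]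
    exact Submodule.norm_orthogonal_starProjection_le hε (hSv _) (hSU _)

/-- The replacement theorem: in `(AS)ⁿ`, the operator `A` may be replaced by `B`
with an error of order `ε` (uniform over spaces of a fixed dimension `d`). -/
theorem replacement_theorem (d : ℕ) (c : ℝ) (hc : 0 < c) :
    ∃ C : ℝ, 0 < C ∧
      ∀ (E : Type) (_ : NormedAddCommGroup E) (_ : InnerProductSpace ℝ E)
        (_ : FiniteDimensional ℝ E), Module.finrank ℝ E = d →
      ∀ (U : Submodule ℝ E) (ε : ℝ), 0 < ε → ε ≤ 1 →
      ∀ S A B : E →L[ℝ] E,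
        ‖S‖ ≤ 1 → ‖A‖ ≤ 1 → ‖B‖ ≤ 1 →
        (∀ u ∈ U, A u ∈ U) → (∀ u ∈ U, B u ∈ U) →
        (∀ w ∈ Uᗮ, A w = w) → (∀ w ∈ Uᗮ, B w = w) →
        (∀ v : E, ‖(U.orthogonalProjectionOnto ((S - 1) v) : E)‖ ≤ ε * ‖v‖) →
        ‖A - B‖ ≤ ε →
        ‖A ^ 2 - 1‖ ≤ ε ^ 2 → ‖B ^ 2 - 1‖ ≤ ε ^ 2 →
        ∀ v₀ : E, ‖v₀‖ ≤ 1 → ‖A v₀ - v₀‖ ≤ ε → ‖B v₀ - v₀‖ ≤ ε →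
        ∀ n : ℕ, (n : ℝ) * ε ≤ c →
          ‖((A ∘L S) ^ n) v₀ - ((B ∘L S) ^ n) v₀‖ ≤ C * ε := by
  refine ⟨(2 + 2 * c) * (1 + 3 / 2 * c) * exp ((2 + 2 * c) * c), by positivity, ?_⟩
  intro E _ _ _ _ U ε hε _ S A B hS hA hB hAU hBU hAUperp hBUperp hSU hAB hA2 hB2 v₀ hv₀ _ _ n hn
  refine norm_pow_apply_sub_pow_apply_le hε.le hS hA hB hAU hBU hAUperp hBUperp (fun v => ?_)
    hAB hA2 hB2 hv₀ hn
  simpa [map_sub] using hSU v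
end

section
/- There exists a constant C > 0 such that for every natural number N ≥ 2, every entry of the 4×4 matrix PG₂(N)² − T_N has absolute value at most C/N, where T_N is the 4×4 real matrix with diagonal entries T[1,1] = T[2,2] = T[3,3] = T[4,4] = 1, off-diagonal entries T[1,2] = T[2,4] = 4/√N and T[2,1] = T[4,2] = −4/√N, and all other entries 0. (In the basis ordering (e₁e₂, e₁N₂, N₁e₂, N₁N₂), the square of the parallel Grover operator is approximated up to O(1/N) by the tridiagonal Toeplitz dynamics on the main-path states e₁e₂, e₁N₂, N₁N₂, acting as the identity on N₁e₂.) -/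
open Matrix
open scoped Kronecker

/-- The tridiagonal Toeplitz approximation `T_N` of `PG₂(N)²`, in the basis
ordering `(e₁e₂, e₁N₂, N₁e₂, N₁N₂)` (bases indexed by `Fin 2 × Fin 2` with
`(0,0) ≡ e₁e₂`, `(0,1) ≡ e₁N₂`, `(1,0) ≡ N₁e₂`, `(1,1) ≡ N₁N₂`). -/
noncomputable def Ttoeplitz (N : ℕ) : Matrix (Fin 2 × Fin 2) (Fin 2 × Fin 2) ℝ :=
  fun p q =>
    if p = q then 1
    else if p = ((0 : Fin 2), (0 : Fin 2)) ∧ q = (0, 1) then 4 / Real.sqrt N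
    else if p = ((0 : Fin 2), (1 : Fin 2)) ∧ q = (1, 1) then 4 / Real.sqrt N
    else if p = ((0 : Fin 2), (1 : Fin 2)) ∧ q = (0, 0) then -(4 / Real.sqrt N)
    else if p = ((1 : Fin 2), (1 : Fin 2)) ∧ q = (0, 1) then -(4 / Real.sqrt N)
    else 0

set_option maxHeartbeats 1000000 in
lemma PG2_apply (N : ℕ) (i j k l : Fin 2) :
    PG2 N (i,j) (k,l) = if k = 0 then GroverM N i 0 * GroverM N j l
      else GroverM N i 1 * IAMM N j l := by
  simp only [PG2, Matrix.mul_apply, Matrix.add_apply, Matrix.kroneckerMap_apply,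
    Fintype.sum_prod_type, Fin.sum_univ_two, Matrix.one_apply]
  fin_cases k <;> fin_cases j <;> simp [Matrix.cons_val_zero, Matrix.cons_val_one]

set_option maxHeartbeats 4000000 in
theorem pg2_sq_approx :
    ∃ C : ℝ, 0 < C ∧ ∀ N : ℕ, 2 ≤ N → ∀ p q : Fin 2 × Fin 2,
      |(PG2 N ^ 2 - Ttoeplitz N) p q| ≤ C / N := by
  use 32
  refine ⟨by norm_num, ?_⟩
  intro N hN p q
  have hN2 : (2:ℝ) ≤ (N : ℝ) := by exact_mod_cast hN
  have hN0 : (0:ℝ) < (N : ℝ) := by linarith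
  have hNne : (N:ℝ) ≠ 0 := ne_of_gt hN0
  have hNu : (N:ℝ) * (N:ℝ)⁻¹ = 1 := mul_inv_cancel₀ hNne
  have hs0 : 0 ≤ Real.sqrt ((N:ℝ) - 1) := Real.sqrt_nonneg _
  have ht0 : 0 < Real.sqrt (N:ℝ) := Real.sqrt_pos.mpr hN0
  have hs2 : Real.sqrt ((N:ℝ) - 1) ^ 2 = (N:ℝ) - 1 := Real.sq_sqrt (by linarith)
  have ht2 : Real.sqrt (N:ℝ) ^ 2 = (N:ℝ) := Real.sq_sqrt (by linarith)
  have hs1 : 1 ≤ Real.sqrt ((N:ℝ) - 1) := by nlinarith [hs2, hs0]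
  have hst : Real.sqrt ((N:ℝ) - 1) ≤ Real.sqrt (N:ℝ) := Real.sqrt_le_sqrt (by linarith)
  have htms : Real.sqrt (N:ℝ) - Real.sqrt ((N:ℝ) - 1) ≤ 1 := by
    nlinarith [hs2, ht2, hs1, hst]
  have hsleN : Real.sqrt ((N:ℝ) - 1) ≤ (N:ℝ) := by nlinarith [hs2, hs0, hN2]
  have ha0 : 0 ≤ 1 - 2/(N:ℝ) := by
    rw [sub_nonneg, div_le_one hN0]; linarith
  have ha1 : 1 - 2/(N:ℝ) ≤ 1 := by
    have : 0 ≤ 2/(N:ℝ) := by positivity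
    linarith
  have hb0 : 0 ≤ 2 * Real.sqrt ((N:ℝ)-1) / N := by positivity
  have hb1 : 2 * Real.sqrt ((N:ℝ)-1) / N ≤ 1 := by
    rw [div_le_one hN0]; nlinarith [hs2, hs0]
  have hbN : (2 * Real.sqrt ((N:ℝ)-1) / N)^2 ≤ 4/(N:ℝ) := by
    rw [div_pow, mul_pow, hs2, div_le_div_iff₀ (by positivity) hN0]
    ring_nf
    nlinarith [hN0]
  have hab : (1 - 2/(N:ℝ))^2 + (2 * Real.sqrt ((N:ℝ)-1) / N)^2 = 1 := by
    field_simp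
    linear_combination (4:ℝ) * hs2
  have habsq : (1 - 2/(N:ℝ))^4 + 2*((1 - 2/(N:ℝ))^2 * (2 * Real.sqrt ((N:ℝ)-1) / N)^2)
      + (2 * Real.sqrt ((N:ℝ)-1) / N)^4 = 1 := by
    linear_combination ((1 - 2/(N:ℝ))^2 + (2 * Real.sqrt ((N:ℝ)-1) / N)^2 + 1) * hab
  have h1' : 0 ≤ (1 - 2/(N:ℝ))^2 * (2 * Real.sqrt ((N:ℝ)-1) / N)^2 := by positivity
  have h1 : (1 - 2/(N:ℝ))^2 * (2 * Real.sqrt ((N:ℝ)-1) / N)^2 ≤ 4/(N:ℝ) := by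
    nlinarith [hbN, ha0, ha1, sq_nonneg (2 * Real.sqrt ((N:ℝ)-1) / N)]
  have hb3 : (2 * Real.sqrt ((N:ℝ)-1) / N)^3 ≤ 4/(N:ℝ) := by
    nlinarith [hb1, hb0, hbN, sq_nonneg (2 * Real.sqrt ((N:ℝ)-1) / N)]
  have h2' : 0 ≤ (1 - 2/(N:ℝ)) * (2 * Real.sqrt ((N:ℝ)-1) / N)^3 := by positivity
  have h2 : (1 - 2/(N:ℝ)) * (2 * Real.sqrt ((N:ℝ)-1) / N)^3 ≤ 4/(N:ℝ) := by
    nlinarith [hb3, ha0, ha1, pow_nonneg hb0 3]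
  have h3' : 0 ≤ (2 * Real.sqrt ((N:ℝ)-1) / N)^4 := by positivity
  have h3 : (2 * Real.sqrt ((N:ℝ)-1) / N)^4 ≤ 4/(N:ℝ) := by
    nlinarith [hb3, hb1, hb0, pow_nonneg hb0 3]
  have h4t : 4 / Real.sqrt (N:ℝ) = 4 * Real.sqrt (N:ℝ) / N := by
    rw [div_eq_div_iff (ne_of_gt ht0) hNne]
    linear_combination (-4:ℝ) * ht2
  have hdiv0 : (0:ℝ) ≤ 4/(N:ℝ) := by positivity
  have h1a3 : 1 - (1 - 2/(N:ℝ))^3 ≤ 6/(N:ℝ) := by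
    have hu0 : (0:ℝ) < (N:ℝ)⁻¹ := by positivity
    have hu2 : (N:ℝ)⁻¹ ≤ 1/2 := by
      nlinarith [hNu, mul_nonneg (by linarith : (0:ℝ) ≤ (N:ℝ)-2) (le_of_lt hu0)]
    have hint : (0:ℝ) ≤ (2/(N:ℝ)*(2/(N:ℝ)))*(3 - 2/(N:ℝ)) := by
      have hc0 : (0:ℝ) ≤ 2/(N:ℝ) := by positivity
      have hc1 : 2/(N:ℝ) ≤ 1 := by rw [div_le_one hN0]; linarith
      exact mul_nonneg (mul_nonneg hc0 hc0) (by linarith)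
    ring_nf at hint ⊢
    linarith [hint]
  have hscube : Real.sqrt ((N:ℝ)-1) * (1 - (1 - 2/(N:ℝ))^3) ≤ 6 := by
    have e1 : 0 ≤ Real.sqrt ((N:ℝ)-1) * (6/(N:ℝ) - (1 - (1 - 2/(N:ℝ))^3)) :=
      mul_nonneg hs0 (by linarith)
    have e2 : 0 ≤ ((N:ℝ) - Real.sqrt ((N:ℝ)-1)) * (6 * (N:ℝ)⁻¹) :=
      mul_nonneg (by linarith) (by positivity)
    have e3 : Real.sqrt ((N:ℝ)-1) * (6/(N:ℝ)) ≤ 6 := by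
      have e2' : 0 ≤ ((N:ℝ) - Real.sqrt ((N:ℝ)-1)) * (6 / (N:ℝ)) :=
        mul_nonneg (by linarith) (by positivity)
      have e4 : (N:ℝ) * (6/(N:ℝ)) = 6 := by field_simp
      ring_nf at e2' e4 ⊢
      linarith [e2', e4]
    ring_nf at e1 e3 ⊢
    linarith [e1, e3]
  have ha3le : (1 - 2/(N:ℝ))^3 ≤ 1 := by
    nlinarith [ha0, ha1, mul_nonneg ha0 ha0]
  have ha30 : 0 ≤ (1 - 2/(N:ℝ))^3 := by positivity
  have hBup : 2*(1 - 2/(N:ℝ))^3*(2 * Real.sqrt ((N:ℝ)-1) / N) - 4 / Real.sqrt (N:ℝ)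
      ≤ 28/(N:ℝ) := by
    rw [h4t]
    have hkey : 0 ≤ ((Real.sqrt (N:ℝ) + 7) - (1 - 2/(N:ℝ))^3 * Real.sqrt ((N:ℝ)-1)) * (4/(N:ℝ)) := by
      apply mul_nonneg _ (by positivity)
      nlinarith [ha3le, ha30, hs0, hst, ht0]
    have expand : ((Real.sqrt (N:ℝ) + 7) - (1 - 2/(N:ℝ))^3 * Real.sqrt ((N:ℝ)-1)) * (4/(N:ℝ))
        = 4 * Real.sqrt (N:ℝ) / N + 28/(N:ℝ)
          - 2*(1 - 2/(N:ℝ))^3*(2 * Real.sqrt ((N:ℝ)-1) / N) := by ring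
    linarith [hkey, expand.le, expand.ge]
  have hBlo : -(28/(N:ℝ)) ≤ 2*(1 - 2/(N:ℝ))^3*(2 * Real.sqrt ((N:ℝ)-1) / N) - 4 / Real.sqrt (N:ℝ) := by
    rw [h4t]
    have hinner : Real.sqrt (N:ℝ) - (1 - 2/(N:ℝ))^3 * Real.sqrt ((N:ℝ)-1) ≤ 7 := by
      nlinarith [htms, hscube, hs0]
    have hkey : 0 ≤ (7 - (Real.sqrt (N:ℝ) - (1 - 2/(N:ℝ))^3 * Real.sqrt ((N:ℝ)-1))) * (4/(N:ℝ)) :=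
      mul_nonneg (by linarith) (by positivity)
    have expand : (7 - (Real.sqrt (N:ℝ) - (1 - 2/(N:ℝ))^3 * Real.sqrt ((N:ℝ)-1))) * (4/(N:ℝ))
        = 28/(N:ℝ) - (4 * Real.sqrt (N:ℝ) / N - 2*(1 - 2/(N:ℝ))^3*(2 * Real.sqrt ((N:ℝ)-1) / N)) := by ring
    linarith [hkey, expand.le, expand.ge]
  ring_nf at habsq h1 h1' h2 h2' h3 h3' hBup hBlo hdiv0
  fin_cases p <;> fin_cases q <;>
  · simp only [Matrix.sub_apply, pow_two, Matrix.mul_apply, Fintype.sum_prod_type,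
      Fin.sum_univ_two, PG2_apply, Ttoeplitz, GroverM, IAMM]
    norm_num [Prod.ext_iff]
    rw [abs_le]
    constructor <;>
    · ring_nf
      linarith [habsq, h1, h1', h2, h2', h3, h3', hBup, hBlo, hdiv0]
end

section
/- Let N ≥ 2 be a natural number, G_N the Grover matrix, and θ_N = arccos(1 − 2/N). Then for every natural number t, G_N^t · (0, 1)ᵀ = (sin(t·θ_N), cos(t·θ_N))ᵀ. (The Grover operator acts as a rotation by angle θ_N in the plane spanned by the normalized solution state and the normalized non-solution state, so after t iterations starting from the uniform non-solution state the amplitude of the solution state is sin(t·θ_N).) -/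
open Matrix Real

/-!
The Grover matrix is the rotation by `θ = arccos (1 - 2 / N)`: its diagonal entries are `cos θ`,
and `sin θ = √(1 - (1 - 2/N)²) = 2 √(N - 1) / N`. Powers of a rotation are rotations by the
multiples of its angle, and the rotation by `φ` sends `(0, 1)` to `(sin φ, cos φ)`.
-/

noncomputable def rotationMatrix (θ : ℝ) : Matrix (Fin 2) (Fin 2) ℝ :=
  !![cos θ, sin θ; -sin θ, cos θ]

theorem rotationMatrix_zero : rotationMatrix 0 = 1 := by
  simp [rotationMatrix, Matrix.one_fin_two]

theorem rotationMatrix_mul (α β : ℝ) :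
    rotationMatrix α * rotationMatrix β = rotationMatrix (α + β) := by
  rw [rotationMatrix, rotationMatrix, mul_fin_two, rotationMatrix, cos_add, sin_add]
  ext i j
  fin_cases i <;> fin_cases j <;> simp <;> ring

theorem rotationMatrix_pow (θ : ℝ) (t : ℕ) : rotationMatrix θ ^ t = rotationMatrix (t * θ) := by
  induction t with
  | zero => simp [rotationMatrix_zero]
  | succ t ih => rw [pow_succ, ih, rotationMatrix_mul, Nat.cast_succ, add_one_mul]

theorem rotationMatrix_mulVec_zero_one (θ : ℝ) :
    rotationMatrix θ *ᵥ ![0, 1] = ![sin θ, cos θ] := by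
  rw [rotationMatrix, mulVec_fin_two]
  simp

theorem sin_arccos_one_sub_two_div {N : ℝ} (hN : 0 < N) :
    sin (arccos (1 - 2 / N)) = 2 * √(N - 1) / N := by
  have h : 1 - (1 - 2 / N) ^ 2 = (2 / N) ^ 2 * (N - 1) := by field_simp; ring
  rw [sin_arccos, h, sqrt_mul (by positivity), sqrt_sq (by positivity)]
  ring

theorem GroverM_eq_rotationMatrix {N : ℕ} (hN : 0 < N) :
    GroverM N = rotationMatrix (arccos (1 - 2 / (N : ℝ))) := by
  have hN' : (1 : ℝ) ≤ N := by exact_mod_cast hN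
  have h_two_div : 2 / (N : ℝ) ≤ 2 := div_le_self zero_le_two hN'
  have h_cos : cos (arccos (1 - 2 / (N : ℝ))) = 1 - 2 / N :=
    cos_arccos (by linarith) (by linarith [show 0 ≤ 2 / (N : ℝ) by positivity])
  rw [rotationMatrix, h_cos, sin_arccos_one_sub_two_div (by positivity), GroverM]

theorem grover_rotation (N : ℕ) (hN : 2 ≤ N) (t : ℕ) :
    (GroverM N ^ t).mulVec ![0, 1] =
      ![Real.sin (t * Real.arccos (1 - 2 / (N : ℝ))),
        Real.cos (t * Real.arccos (1 - 2 / (N : ℝ)))] := by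
  rw [GroverM_eq_rotationMatrix (by omega), rotationMatrix_pow, rotationMatrix_mulVec_zero_one]
end

section
/- Let A be a square real matrix with ‖A‖ ≤ 1 and ‖A² − I‖ ≤ η for some η ≥ 0, where ‖·‖ is the ℓ² operator norm. Then for every natural number j, ‖A^{2j} − I‖ ≤ j·η and ‖A^{2j+1} − A‖ ≤ j·η. (This is the intermediate claim of the paper's replacement theorem: when η = O(1/N), the powers A^i for i = O(√N) can be approximated up to O(1/√N) by A when i is odd and by I when i is even.) -/
open Matrix

/-- The ℓ² operator norm of a square real matrix. -/
noncomputable def l2OpNorm {n : Type*} [Fintype n] [DecidableEq n]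
    (M : Matrix n n ℝ) : ℝ :=
  ‖Matrix.toEuclideanCLM (𝕜 := ℝ) M‖

theorem near_involution_powers {d : ℕ} (A : Matrix (Fin d) (Fin d) ℝ) (η : ℝ)
    (hη : 0 ≤ η) (hA : l2OpNorm A ≤ 1) (hA2 : l2OpNorm (A ^ 2 - 1) ≤ η) (j : ℕ) :
    l2OpNorm (A ^ (2 * j) - 1) ≤ j * η ∧
    l2OpNorm (A ^ (2 * j + 1) - A) ≤ j * η := by
  set f := Matrix.toEuclideanCLM (𝕜 := ℝ) (n := Fin d)
  set B := f A with hB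
  have hBn : ‖B‖ ≤ 1 := hA
  have hB2 : ‖B ^ 2 - 1‖ ≤ η := by
    have : f (A ^ 2 - 1) = B ^ 2 - 1 := by rw [map_sub, map_pow, _root_.map_one]
    rw [l2OpNorm] at hA2; rw [this] at hA2; exact hA2
  have key : ∀ j : ℕ, ‖B ^ (2 * j) - 1‖ ≤ j * η := by
    intro j
    induction j with
    | zero =>
        simp only [Nat.mul_zero, pow_zero, sub_self, norm_zero, Nat.cast_zero, zero_mul, le_refl]
    | succ k ih =>
      have heq : B ^ (2 * (k + 1)) - 1 = B ^ 2 * (B ^ (2 * k) - 1) + (B ^ 2 - 1) := by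
        rw [mul_sub, mul_one, ← pow_add]
        ring_nf
        abel
      calc ‖B ^ (2 * (k + 1)) - 1‖
          ≤ ‖B ^ 2 * (B ^ (2 * k) - 1)‖ + ‖B ^ 2 - 1‖ := by
            rw [heq]; exact norm_add_le _ _
        _ ≤ ‖B‖ ^ 2 * ‖B ^ (2 * k) - 1‖ + η := by
            gcongr
            exact le_trans (norm_mul_le _ _) (by gcongr; exact norm_pow_le' B two_pos)
        _ ≤ 1 * (k * η) + η := by
            have h2 : ‖B‖ ^ 2 ≤ 1 := pow_le_one₀ (norm_nonneg _) hBn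
            have hnn : (0:ℝ) ≤ ‖B ^ (2 * k) - 1‖ := norm_nonneg _
            nlinarith [norm_nonneg (B ^ (2*k) - 1)]
        _ = (k + 1 : ℕ) * η := by push_cast; ring
  constructor
  · have : f (A ^ (2 * j) - 1) = B ^ (2 * j) - 1 := by simp [hB]
    rw [l2OpNorm, this]; exact key j
  · have heq : f (A ^ (2 * j + 1) - A) = B * (B ^ (2 * j) - 1) := by
      rw [map_sub, map_pow, mul_sub, mul_one, ← pow_succ']
    calc l2OpNorm (A ^ (2 * j + 1) - A) = ‖B * (B ^ (2 * j) - 1)‖ := by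
          rw [l2OpNorm, heq]
      _ ≤ ‖B‖ * ‖B ^ (2 * j) - 1‖ := norm_mul_le _ _
      _ ≤ 1 * (j * η) := by
          have := key j
          have hnn : (0:ℝ) ≤ ‖B ^ (2 * j) - 1‖ := norm_nonneg _
          nlinarith
      _ = j * η := one_mul _
end
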